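/- Let (Σ,P) be a Kelvin–Planck theory, let (Σ_Θ,P_Θ) be a thermometer for (Σ,P) (a Kelvin–Planck theory with state space disjoint from Σ whose hotness levels are totally ordered by its hotter-than relation), and let (Σ_C,P_C) be a thermometric conjunction of (Σ,P) and (Σ_Θ,P_Θ). Then: (i) the hotness levels of (Σ_C,P_C) are totally ordered by the hotter-than relation ≻_C of (Σ_C,P_C); in particular, any two states of Σ not of the same hotness in (Σ_C,P_C) are ≻_C-comparable; (ii) if the thermometer is ideal (all of its Clausius–Duhem temperature scales are positive multiples of some fixed one), then all Clausius–Duhem temperature scales for (Σ_C,P_C) are positive multiples of some fixed one, and in particular the restrictions to Σ of all Clausius–Duhem temperature scales for (Σ_C,P_C) differ by at most a positive multiple. -/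

import Mathlib

open Set

noncomputable section

/-- Signed regular Borel measures on `X`, modeled via the Riesz representation
theorem as the weak-star dual of `C(X, ℝ)`. -/
abbrev Meas (X : Type*) [TopologicalSpace X] := WeakDual ℝ C(X, ℝ)

/-- The ambient space containing `V(X) = M°(X) ⊕ M(X)`; membership in the
subspace `M°(X)` of the first component is expressed by `p.1 1 = 0`. -/
abbrev VSp (X : Type*) [TopologicalSpace X] := Meas X × Meas X

/-- The cone of nonnegative measures. -/
def PosMeas (X : Type*) [TopologicalSpace X] : Set (Meas X) :=
  {μ | ∀ f : C(X, ℝ), (∀ x, 0 ≤ f x) → 0 ≤ μ f}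

variable {X : Type*} [TopologicalSpace X]

/-- The Dirac measure at a point, i.e. the evaluation functional. -/
def dirac (x : X) : Meas X :=
  (⟨⟨⟨fun f => f x, fun _ _ => rfl⟩, fun _ _ => rfl⟩,
    continuous_eval_const x⟩ : C(X, ℝ) →L[ℝ] ℝ)

/-- The set of nonnegative multiples of members of `P`. -/
def coneOf (P : Set (VSp X)) : Set (VSp X) :=
  {x | ∃ c : ℝ, 0 ≤ c ∧ ∃ p ∈ P, x = c • p}

/-- `\hat P`, the weak-star closure of the cone generated by `P`. -/
def hatP (P : Set (VSp X)) : Set (VSp X) :=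
  closure (coneOf P)

/-- A thermodynamical theory: processes have change of condition with total mass
zero (i.e. `P ⊆ V(X)`), and `\hat P` is convex. -/
def IsThermoTheory (P : Set (VSp X)) : Prop :=
  (∀ p ∈ P, p.1 (1 : C(X, ℝ)) = 0) ∧ Convex ℝ (hatP P)

/-- A Kelvin–Planck theory: a thermodynamical theory with
`\hat P ∩ ({0} × M₊(X)) = {(0,0)}`. -/
def IsKelvinPlanck (P : Set (VSp X)) : Prop :=
  IsThermoTheory P ∧ hatP P ∩ (({0} : Set (Meas X)) ×ˢ PosMeas X) = {(0, 0)}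

/-- A Clausius–Duhem pair `(η, T)` for the theory `P`: `η` and `T` are continuous,
`T` is strictly positive, and for every continuous `β` equal pointwise to `1/T`
(such a `β` exists, and is unique, by positivity of `T`), the Clausius–Duhem
inequality `∫ η d(Δm) ≥ ∫ (1/T) dq` holds for every process in `P`. -/
def IsCDPair (P : Set (VSp X)) (η T : C(X, ℝ)) : Prop :=
  (∀ x, 0 < T x) ∧
    ∀ β : C(X, ℝ), (∀ x, β x = (T x)⁻¹) → ∀ p ∈ P, p.2 β ≤ p.1 η

/-- A Clausius–Duhem temperature scale. -/
def IsCDTemp (P : Set (VSp X)) (T : C(X, ℝ)) : Prop :=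
  ∃ η : C(X, ℝ), IsCDPair P η T

/-- Two states are of the same hotness: both `(0, δ_a − δ_b)` and `(0, δ_b − δ_a)`
belong to `\hat P`. -/
def SameHotness (P : Set (VSp X)) (a b : X) : Prop :=
  ((0 : Meas X), dirac a - dirac b) ∈ hatP P ∧
    ((0 : Meas X), dirac b - dirac a) ∈ hatP P

/-- The hotness level of a state. -/
def hotnessLevel (P : Set (VSp X)) (a : X) : Set X :=
  {b | SameHotness P a b}

/-- A subset of the state space that is a hotness level. -/
def IsHotnessLevel (P : Set (VSp X)) (h : Set X) : Prop :=
  ∃ a : X, h = hotnessLevel P a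

/-- The (signed) measure `μ` is supported in the set `A`: `μ` annihilates every
continuous function vanishing on `A`. -/
def SuppIn (μ : Meas X) (A : Set X) : Prop :=
  ∀ f : C(X, ℝ), (∀ x ∈ A, f x = 0) → μ f = 0

/-- `\hat Q` contains a passive heat transfer from hotness level `h` to `h'`:
an element `(0, μ − μ')` of `\hat Q` with `μ, μ'` nonnegative, `supp μ ⊆ h`,
`supp μ' ⊆ h'` and `μ(h) = μ'(h') > 0` (the common value being the total mass). -/
def IsPassiveHT (Q : Set (VSp X)) (h h' : Set X) : Prop :=
  ∃ μ μ' : Meas X, μ ∈ PosMeas X ∧ μ' ∈ PosMeas X ∧ SuppIn μ h ∧ SuppIn μ' h' ∧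
    μ (1 : C(X, ℝ)) = μ' (1 : C(X, ℝ)) ∧ 0 < μ (1 : C(X, ℝ)) ∧
    ((0 : Meas X), μ - μ') ∈ hatP Q

/-- Hotness level `h'` is hotter than `h`: the levels are distinct and every
thermodynamical theory whose closed process cone contains `P` together with a
passive heat transfer from `h` to `h'` fails to be a Kelvin–Planck theory. -/
def Hotter (P : Set (VSp X)) (h' h : Set X) : Prop :=
  h' ≠ h ∧ ∀ Pd : Set (VSp X), IsThermoTheory Pd → P ⊆ hatP Pd →
    IsPassiveHT Pd h h' → ¬ IsKelvinPlanck Pd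

/-- State `a` is hotter than state `b`. -/
def HotterState (P : Set (VSp X)) (a b : X) : Prop :=
  Hotter P (hotnessLevel P a) (hotnessLevel P b)

/-- A Carnot element of the theory `P` operating between hotness levels `h'` and
`h`: a reversible cyclic element `(0, μ' − μ)` with `μ', μ` nonzero nonnegative
measures supported in `h'`, `h` respectively. -/
def IsCarnotBetween (P : Set (VSp X)) (h' h : Set X) (p : VSp X) : Prop :=
  p ∈ hatP P ∧ -p ∈ hatP P ∧
    ∃ μ' μ : Meas X, μ' ∈ PosMeas X ∧ μ ∈ PosMeas X ∧ μ' ≠ 0 ∧ μ ≠ 0 ∧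
      SuppIn μ' h' ∧ SuppIn μ h ∧ p = ((0 : Meas X), μ' - μ)

end

noncomputable section

/-- The inclusion of the left summand as a continuous map. -/
def inlCM (X Y : Type*) [TopologicalSpace X] [TopologicalSpace Y] : C(X, X ⊕ Y) :=
  ⟨Sum.inl, continuous_inl⟩

/-- The inclusion of the right summand as a continuous map. -/
def inrCM (X Y : Type*) [TopologicalSpace X] [TopologicalSpace Y] : C(Y, X ⊕ Y) :=
  ⟨Sum.inr, continuous_inr⟩

/-- The continuous indicator function of the left summand of a disjoint union. -/
def charL (X Y : Type*) [TopologicalSpace X] [TopologicalSpace Y] : C(X ⊕ Y, ℝ) :=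
  ⟨Sum.elim (fun _ => (1 : ℝ)) (fun _ => (0 : ℝ)), by continuity⟩

/-- The continuous indicator function of the right summand of a disjoint union. -/
def charR (X Y : Type*) [TopologicalSpace X] [TopologicalSpace Y] : C(X ⊕ Y, ℝ) :=
  ⟨Sum.elim (fun _ => (0 : ℝ)) (fun _ => (1 : ℝ)), by continuity⟩

/-- `P` is essentially contained in `Q` along the embedding `ι`: every process of
`P`, extended by zero outside the range of `ι` (i.e. pushed forward along `ι`),
belongs to `Q`. -/
def EssCont {Z W : Type*} [TopologicalSpace Z] [TopologicalSpace W]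
    (ι : C(Z, W)) (P : Set (VSp Z)) (Q : Set (VSp W)) : Prop :=
  ∀ p ∈ P, ∃ q ∈ Q, ∀ f : C(W, ℝ),
    q.1 f = p.1 (f.comp ι) ∧ q.2 f = p.2 (f.comp ι)

/-- `P₃`, on the disjoint union `X ⊕ Y`, is a conjunction of the theories `P₁`
(on `X`) and `P₂` (on `Y`): it is a thermodynamical theory essentially containing
`P₁` and `P₂`, and every change of condition of `P₃` vanishes on each of `X`, `Y`. -/
def IsConjunction {X Y : Type*} [TopologicalSpace X] [TopologicalSpace Y]
    (P₁ : Set (VSp X)) (P₂ : Set (VSp Y)) (P₃ : Set (VSp (X ⊕ Y))) : Prop :=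
  IsThermoTheory P₃ ∧
    EssCont (inlCM X Y) P₁ P₃ ∧ EssCont (inrCM X Y) P₂ P₃ ∧
    ∀ p ∈ P₃, p.1 (charL X Y) = 0 ∧ p.1 (charR X Y) = 0

/-- State `a` is weakly hotter than state `b` in the theory `P`. -/
def WHotterState {X : Type*} [TopologicalSpace X] (P : Set (VSp X)) (a b : X) : Prop :=
  ¬ SameHotness P a b ∧
    ∃ ν ∈ PosMeas X, ((0 : Meas X), dirac a - dirac b + ν) ∈ hatP P

/-- The hotness levels of the theory `P` are totally ordered by the
hotter-than relation. -/
def TotallyOrderedHotness {X : Type*} [TopologicalSpace X] (P : Set (VSp X)) : Prop :=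
  ∀ a b : X, SameHotness P a b ∨ HotterState P a b ∨ HotterState P b a

/-- `PC`, on `Θ ⊕ X`, is a thermometric conjunction of the thermometer theory `PΘ`
(on `Θ`) and the theory `P` (on `X`): a Kelvin–Planck conjunction in which every
state of `X` is of the same hotness as some state of `Θ`. -/
def IsThermometricConjunction {Θ X : Type*} [TopologicalSpace Θ] [TopologicalSpace X]
    (PΘ : Set (VSp Θ)) (P : Set (VSp X)) (PC : Set (VSp (Θ ⊕ X))) : Prop :=
  IsKelvinPlanck PC ∧ IsConjunction PΘ P PC ∧
    ∀ σ : X, ∃ θ : Θ, SameHotness PC (Sum.inr σ) (Sum.inl θ)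

end

/-!
A Kelvin–Planck theory on a compact state space has a Clausius–Duhem pair: Hahn–Banach
separates the closed convex cone `\hat P` from the compact convex set `{0} × {probability
measures}`, and the separating functional, written as `(μ₁, μ₂) ↦ μ₁ η' + μ₂ γ`, has `γ > 0`, so
`(-η', 1/γ)` is such a pair. Every Clausius–Duhem temperature is constant on hotness levels, and
strictly larger on a hotter level: otherwise the theory extended by the passive heat transfer
from the colder to the hotter level still satisfies the Clausius–Duhem inequality, hence is
Kelvin–Planck, contradicting the definition of "hotter".

In a thermometric conjunction every state has the same hotness as a thermometer state, and
Clausius–Duhem pairs of any theory extending the conjunction restrict to pairs of the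
thermometer. Hence a strict order between thermometer states is seen by every such pair and
forbids the reverse passive heat transfer, so the order of the thermometer passes to the
conjunction; and a temperature scale of the conjunction is determined by its restriction to the
thermometer.
-/

noncomputable section

variable {Z W : Type*} [TopologicalSpace Z] [TopologicalSpace W]

section Cone

lemma subset_hatP (P : Set (VSp Z)) : P ⊆ hatP P := fun p hp =>
  subset_closure ⟨1, zero_le_one, p, hp, (one_smul ℝ p).symm⟩

lemma hatP_subset_of_isClosed {P C : Set (VSp Z)} (hC : IsClosed C)
    (hcone : ∀ c : ℝ, 0 ≤ c → ∀ p ∈ C, c • p ∈ C) (hP : P ⊆ C) : hatP P ⊆ C :=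
  closure_minimal (by rintro _ ⟨c, hc, p, hp, rfl⟩; exact hcone c hc p (hP hp)) hC

lemma smul_mem_hatP {P : Set (VSp Z)} {c : ℝ} (hc : 0 ≤ c) {p : VSp Z} (hp : p ∈ hatP P) :
    c • p ∈ hatP P := by
  rcases hc.eq_or_lt with rfl | hc
  · obtain ⟨_, ⟨_, -, q, hq, rfl⟩⟩ := closure_nonempty_iff.1 ⟨p, hp⟩
    rw [zero_smul]
    exact subset_closure ⟨0, le_rfl, q, hq, (zero_smul ℝ q).symm⟩
  · refine map_mem_closure (continuous_const_smul c) hp ?_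
    rintro _ ⟨d, hd, q, hq, rfl⟩
    exact ⟨c * d, by positivity, q, hq, smul_smul c d q⟩

lemma hatP_subset_hatP {P Q : Set (VSp Z)} (h : P ⊆ hatP Q) : hatP P ⊆ hatP Q :=
  hatP_subset_of_isClosed isClosed_closure (fun _ hc _ hp => smul_mem_hatP hc hp) h

lemma add_mem_hatP {P : Set (VSp Z)} (hconv : Convex ℝ (hatP P)) {p q : VSp Z}
    (hp : p ∈ hatP P) (hq : q ∈ hatP P) : p + q ∈ hatP P := by
  have hmid := hconv hp hq (by norm_num : (0 : ℝ) ≤ 1 / 2) (by norm_num : (0 : ℝ) ≤ 1 / 2)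
    (by norm_num)
  convert smul_mem_hatP (by norm_num : (0 : ℝ) ≤ 2) hmid using 1
  rw [smul_add, smul_smul, smul_smul]
  norm_num

lemma apply_le_apply_of_mem_hatP {P : Set (VSp Z)} {η β : C(Z, ℝ)}
    (h : ∀ p ∈ P, p.2 β ≤ p.1 η) {p : VSp Z} (hp : p ∈ hatP P) : p.2 β ≤ p.1 η :=
  hatP_subset_of_isClosed (C := {p | p.2 β ≤ p.1 η})
    (isClosed_le ((WeakDual.eval_continuous β).comp continuous_snd)
      ((WeakDual.eval_continuous η).comp continuous_fst))
    (fun c hc _ hq => show c * _ ≤ c * _ from mul_le_mul_of_nonneg_left hq hc) h hp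

lemma fst_apply_one_of_mem_hatP {P : Set (VSp Z)} (h : ∀ p ∈ P, p.1 (1 : C(Z, ℝ)) = 0)
    {p : VSp Z} (hp : p ∈ hatP P) : p.1 (1 : C(Z, ℝ)) = 0 :=
  hatP_subset_of_isClosed (C := {p | p.1 (1 : C(Z, ℝ)) = 0})
    (isClosed_eq ((WeakDual.eval_continuous 1).comp continuous_fst) continuous_const)
    (fun c _ q hq => show c * q.1 1 = 0 by rw [show q.1 1 = 0 from hq, mul_zero]) h hp

lemma IsKelvinPlanck.zero_mem_hatP {P : Set (VSp Z)} (h : IsKelvinPlanck P) :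
    (0 : VSp Z) ∈ hatP P := by
  have : ((0 : Meas Z), (0 : Meas Z)) ∈ hatP P ∩ (({0} : Set (Meas Z)) ×ˢ PosMeas Z) := by
    rw [h.2]; rfl
  exact this.1

end Cone

section PosMeas

lemma posMeas_apply_mono {ν : Meas Z} (hν : ν ∈ PosMeas Z) {f g : C(Z, ℝ)}
    (h : ∀ x, f x ≤ g x) : ν f ≤ ν g := by
  have := hν (g - f) fun x => sub_nonneg.2 (h x)
  rwa [map_sub, sub_nonneg] at this

lemma apply_smul_one (ν : Meas Z) (c : ℝ) : ν (c • (1 : C(Z, ℝ))) = c * ν 1 := by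
  rw [map_smul, smul_eq_mul]

lemma posMeas_abs_apply_le [CompactSpace Z] {ν : Meas Z} (hν : ν ∈ PosMeas Z)
    (f : C(Z, ℝ)) : |ν f| ≤ ‖f‖ * ν 1 := by
  have hf : ∀ x, |f x| ≤ ‖f‖ := fun x => by simpa using f.norm_coe_le_norm x
  have hub := posMeas_apply_mono hν (g := ‖f‖ • 1) fun x => by simpa using (abs_le.1 (hf x)).2
  have hlb := posMeas_apply_mono hν (f := (-‖f‖) • 1) (g := f) fun x => by
    simpa using (abs_le.1 (hf x)).1
  rw [apply_smul_one] at hub hlb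
  exact abs_le.2 ⟨by linarith, hub⟩

lemma posMeas_eq_zero_of_apply_nonpos [CompactSpace Z] {ν : Meas Z} (hν : ν ∈ PosMeas Z)
    {β : C(Z, ℝ)} (hβ : ∀ x, 0 < β x) (hle : ν β ≤ 0) : ν = 0 := by
  obtain ⟨ε, hε, hεβ⟩ := isCompact_univ.exists_forall_le' β.continuous.continuousOn
    fun x _ => hβ x
  have hone : ν 1 = 0 := by
    have h1 := posMeas_apply_mono hν (f := ε • 1) (g := β) fun x => by
      simpa using hεβ x (mem_univ x)
    rw [apply_smul_one] at h1
    nlinarith [hν 1 fun _ => zero_le_one]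
  refine DFunLike.ext _ _ fun f => show ν f = 0 from ?_
  simpa [hone] using posMeas_abs_apply_le hν f

end PosMeas

section Hotness

variable {P : Set (VSp Z)}

lemma SameHotness.refl (h0 : (0 : VSp Z) ∈ hatP P) (a : Z) : SameHotness P a a := by
  simp only [SameHotness, sub_self]
  exact ⟨h0, h0⟩

lemma SameHotness.symm {a b : Z} (h : SameHotness P a b) : SameHotness P b a := ⟨h.2, h.1⟩

lemma SameHotness.trans (hconv : Convex ℝ (hatP P)) {a b c : Z} (hab : SameHotness P a b)
    (hbc : SameHotness P b c) : SameHotness P a c := by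
  constructor
  · simpa using add_mem_hatP hconv hab.1 hbc.1
  · simpa using add_mem_hatP hconv hbc.2 hab.2

lemma SameHotness.hotnessLevel_eq (hconv : Convex ℝ (hatP P)) {a b : Z}
    (h : SameHotness P a b) : hotnessLevel P a = hotnessLevel P b :=
  Set.ext fun _ => ⟨h.symm.trans hconv, h.trans hconv⟩

lemma sameHotness_of_hotnessLevel_eq (h0 : (0 : VSp Z) ∈ hatP P) {a b : Z}
    (h : hotnessLevel P a = hotnessLevel P b) : SameHotness P a b :=
  show b ∈ hotnessLevel P a from h ▸ SameHotness.refl h0 b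

end Hotness

section Pushforward

def Meas.map (ι : C(Z, W)) (μ : Meas Z) : Meas W :=
  StrongDual.toWeakDual <| (WeakDual.toStrongDual μ).comp
    ⟨(ContinuousMap.compRightAlgHom ℝ ℝ ι).toLinearMap,
      ContinuousMap.compRightAlgHom_continuous ℝ ℝ ι⟩

lemma Meas.continuous_map (ι : C(Z, W)) : Continuous (Meas.map ι) :=
  WeakDual.continuous_of_continuous_eval fun f => WeakDual.eval_continuous (f.comp ι)

def VSp.map (ι : C(Z, W)) (p : VSp Z) : VSp W := (Meas.map ι p.1, Meas.map ι p.2)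

lemma VSp.continuous_map (ι : C(Z, W)) : Continuous (VSp.map ι) :=
  ((Meas.continuous_map ι).comp continuous_fst).prodMk
    ((Meas.continuous_map ι).comp continuous_snd)

lemma VSp.map_smul (ι : C(Z, W)) (c : ℝ) (p : VSp Z) : VSp.map ι (c • p) = c • VSp.map ι p :=
  Prod.ext (DFunLike.ext _ _ fun _ => rfl) (DFunLike.ext _ _ fun _ => rfl)

lemma EssCont.map_mem {ι : C(Z, W)} {P : Set (VSp Z)} {Q : Set (VSp W)} (h : EssCont ι P Q)
    {p : VSp Z} (hp : p ∈ P) : VSp.map ι p ∈ Q := by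
  obtain ⟨q, hq, hqp⟩ := h p hp
  convert hq using 1
  exact Prod.ext (DFunLike.ext _ _ fun f => (hqp f).1.symm)
    (DFunLike.ext _ _ fun f => (hqp f).2.symm)

lemma EssCont.map_mem_hatP {ι : C(Z, W)} {P : Set (VSp Z)} {Q : Set (VSp W)}
    (h : EssCont ι P Q) {p : VSp Z} (hp : p ∈ hatP P) : VSp.map ι p ∈ hatP Q :=
  hatP_subset_of_isClosed (C := VSp.map ι ⁻¹' hatP Q)
    (isClosed_closure.preimage (VSp.continuous_map ι))
    (fun c hc _ hq => by simpa [VSp.map_smul] using smul_mem_hatP hc hq)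
    (fun _ hq => subset_hatP Q (h.map_mem hq)) hp

lemma SameHotness.map_of_essCont {ι : C(Z, W)} {P : Set (VSp Z)} {Q : Set (VSp W)}
    (h : EssCont ι P Q) {a b : Z} (hab : SameHotness P a b) : SameHotness Q (ι a) (ι b) := by
  have hmap : ∀ x y : Z, VSp.map ι ((0 : Meas Z), dirac x - dirac y) =
      ((0 : Meas W), dirac (ι x) - dirac (ι y)) := fun _ _ =>
    Prod.ext (DFunLike.ext _ _ fun _ => rfl) (DFunLike.ext _ _ fun _ => rfl)
  exact ⟨hmap a b ▸ h.map_mem_hatP hab.1, hmap b a ▸ h.map_mem_hatP hab.2⟩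

end Pushforward

section ClausiusDuhem

def recip (T : C(Z, ℝ)) (hT : ∀ x, 0 < T x) : C(Z, ℝ) :=
  ⟨fun z => (T z)⁻¹, T.continuous.inv₀ fun z => (hT z).ne'⟩

variable {P Q : Set (VSp Z)} {η T : C(Z, ℝ)}

lemma IsCDPair.apply_le (h : IsCDPair P η T) {p : VSp Z} (hp : p ∈ hatP P) :
    p.2 (recip T h.1) ≤ p.1 η :=
  apply_le_apply_of_mem_hatP (h.2 _ fun _ => rfl) hp

lemma IsCDPair.of_subset_hatP (h : IsCDPair Q η T) (hPQ : P ⊆ hatP Q) : IsCDPair P η T := by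
  refine ⟨h.1, fun β hβ p hp => ?_⟩
  obtain rfl : β = recip T h.1 := ContinuousMap.ext hβ
  exact h.apply_le (hPQ hp)

lemma IsCDPair.comp {ι : C(Z, W)} {Q : Set (VSp W)} {η T : C(W, ℝ)} (h : IsCDPair Q η T)
    (hess : EssCont ι P Q) : IsCDPair P (η.comp ι) (T.comp ι) := by
  refine ⟨fun z => h.1 (ι z), fun β hβ p hp => ?_⟩
  obtain rfl : β = (recip T h.1).comp ι := ContinuousMap.ext hβ
  exact h.apply_le (subset_hatP Q (hess.map_mem hp))

lemma IsCDPair.apply_eq_of_sameHotness (h : IsCDPair P η T) {a b : Z}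
    (hab : SameHotness P a b) : T a = T b := by
  have h₁ := h.apply_le hab.1
  have h₂ := h.apply_le hab.2
  change (T a)⁻¹ - (T b)⁻¹ ≤ 0 at h₁
  change (T b)⁻¹ - (T a)⁻¹ ≤ 0 at h₂
  exact inv_injective (by linarith)

lemma SuppIn.apply_eq_mul {μ : Meas Z} {A : Set Z} (hμ : SuppIn μ A) {β : C(Z, ℝ)} {c : ℝ}
    (hc : ∀ x ∈ A, β x = c) : μ β = c * μ 1 := by
  have := hμ (β - c • 1) fun x hx => by simp [hc x hx]
  rwa [map_sub, apply_smul_one, sub_eq_zero] at this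

lemma IsCDPair.le_of_isPassiveHT (h : IsCDPair P η T) {s s' : Set Z} {a b : Z}
    (ha : ∀ x ∈ s, T x = T a) (hb : ∀ x ∈ s', T x = T b) (hpass : IsPassiveHT P s s') :
    T b ≤ T a := by
  obtain ⟨μ, μ', -, -, hμ, hμ', hmass, hpos, hmem⟩ := hpass
  have hCD := h.apply_le hmem
  change μ (recip T h.1) - μ' (recip T h.1) ≤ 0 at hCD
  rw [hμ.apply_eq_mul (c := (T a)⁻¹) fun x hx => congrArg Inv.inv (ha x hx),
    hμ'.apply_eq_mul (c := (T b)⁻¹) fun x hx => congrArg Inv.inv (hb x hx), ← hmass] at hCD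
  have : (T a)⁻¹ ≤ (T b)⁻¹ := by nlinarith
  exact (inv_le_inv₀ (h.1 a) (h.1 b)).1 this

lemma IsCDPair.isKelvinPlanck [CompactSpace Z] (h : IsCDPair P η T) (hP : IsThermoTheory P)
    (h0 : (0 : VSp Z) ∈ hatP P) : IsKelvinPlanck P := by
  refine ⟨hP, Set.eq_singleton_iff_unique_mem.2 ⟨⟨h0, rfl, fun _ _ => le_rfl⟩, ?_⟩⟩
  rintro ⟨p₁, p₂⟩ ⟨hp, rfl, hp₂⟩
  have hCD : p₂ (recip T h.1) ≤ 0 := h.apply_le hp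
  rw [posMeas_eq_zero_of_apply_nonpos (ν := p₂) hp₂ (fun x => inv_pos.2 (h.1 x)) hCD]

end ClausiusDuhem

section AddRay

def addRay (P : Set (VSp Z)) (v : VSp Z) : Set (VSp Z) :=
  {x | ∃ q ∈ hatP P, ∃ c : ℝ, 0 ≤ c ∧ x = q + c • v}

variable {P : Set (VSp Z)} {v : VSp Z}

lemma hatP_addRay : hatP (addRay P v) = closure (addRay P v) := by
  refine congrArg closure (Set.Subset.antisymm ?_ fun x hx =>
    ⟨1, zero_le_one, x, hx, (one_smul ℝ x).symm⟩)
  rintro _ ⟨c, hc, _, ⟨q, hq, d, hd, rfl⟩, rfl⟩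
  exact ⟨c • q, smul_mem_hatP hc hq, c * d, by positivity, by rw [smul_add, smul_smul]⟩

lemma subset_hatP_addRay : P ⊆ hatP (addRay P v) := fun p hp =>
  hatP_addRay (v := v) ▸ subset_closure ⟨p, subset_hatP P hp, 0, le_rfl, by simp⟩

lemma mem_hatP_addRay (h0 : (0 : VSp Z) ∈ hatP P) : v ∈ hatP (addRay P v) :=
  hatP_addRay (v := v) ▸ subset_closure ⟨0, h0, 1, zero_le_one, by simp⟩

lemma IsThermoTheory.addRay (hP : IsThermoTheory P) (hv : v.1 (1 : C(Z, ℝ)) = 0) :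
    IsThermoTheory (addRay P v) := by
  refine ⟨?_, hatP_addRay (v := v) ▸ Convex.closure ?_⟩
  · rintro _ ⟨q, hq, c, -, rfl⟩
    change q.1 1 + c * v.1 1 = 0
    rw [fst_apply_one_of_mem_hatP hP.1 hq, hv, mul_zero, zero_add]
  · rintro _ ⟨q₁, hq₁, c₁, hc₁, rfl⟩ _ ⟨q₂, hq₂, c₂, hc₂, rfl⟩ a b ha hb hab
    refine ⟨a • q₁ + b • q₂, hP.2 hq₁ hq₂ ha hb hab, a * c₁ + b * c₂, by positivity, ?_⟩
    rw [smul_add, smul_add, smul_smul, smul_smul, add_smul]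
    abel

lemma IsCDPair.addRay {η T : C(Z, ℝ)} (h : IsCDPair P η T) (hv : v.2 (recip T h.1) ≤ v.1 η) :
    IsCDPair (addRay P v) η T := by
  refine ⟨h.1, fun β hβ _ ⟨q, hq, c, hc, hx⟩ => ?_⟩
  obtain rfl : β = recip T h.1 := ContinuousMap.ext hβ
  subst hx
  change q.2 _ + c * v.2 _ ≤ q.1 η + c * v.1 η
  exact add_le_add (h.apply_le hq) (mul_le_mul_of_nonneg_left hv hc)

end AddRay

lemma IsCDPair.lt_of_hotterState [CompactSpace Z] {P : Set (VSp Z)} {η T : C(Z, ℝ)}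
    (hcd : IsCDPair P η T) (hP : IsKelvinPlanck P) {a b : Z} (hab : HotterState P a b) :
    T b < T a := by
  by_contra! hle
  set v : VSp Z := ((0 : Meas Z), dirac b - dirac a)
  have h0 := hP.zero_mem_hatP
  have hv : v.2 (recip T hcd.1) ≤ v.1 η := by
    change (T b)⁻¹ - (T a)⁻¹ ≤ 0
    exact sub_nonpos.2 (inv_anti₀ (hcd.1 a) hle)
  have hpass : IsPassiveHT (_root_.addRay P v) (hotnessLevel P b) (hotnessLevel P a) :=
    ⟨dirac b, dirac a, fun _ hf => hf b, fun _ hf => hf a,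
      fun _ hf => hf b (SameHotness.refl h0 b), fun _ hf => hf a (SameHotness.refl h0 a),
      rfl, one_pos, mem_hatP_addRay h0⟩
  have hth := hP.1.addRay (v := v) rfl
  exact hab.2 _ hth subset_hatP_addRay hpass
    ((hcd.addRay hv).isKelvinPlanck hth (hatP_subset_hatP subset_hatP_addRay h0))

section Existence

instance WeakDual.instLocallyConvexSpace {E : Type*} [AddCommGroup E] [Module ℝ E]
    [TopologicalSpace E] : LocallyConvexSpace ℝ (WeakDual ℝ E) :=
  WeakBilin.locallyConvexSpace

lemma exists_apply_eq_fst_add_snd (f : VSp Z →L[ℝ] ℝ) :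
    ∃ η γ : C(Z, ℝ), ∀ p : VSp Z, f p = p.1 η + p.2 γ := by
  -- every weak-* continuous functional is evaluation at a point of the predual
  obtain ⟨η, hη⟩ := LinearMap.dualEmbedding_surjective (topDualPairing ℝ C(Z, ℝ))
    (f.comp (ContinuousLinearMap.inl ℝ _ _))
  obtain ⟨γ, hγ⟩ := LinearMap.dualEmbedding_surjective (topDualPairing ℝ C(Z, ℝ))
    (f.comp (ContinuousLinearMap.inr ℝ _ _))
  refine ⟨η, γ, fun p => ?_⟩
  rw [← f.comp_inl_add_comp_inr]
  exact congrArg₂ (· + ·) (DFunLike.congr_fun hη p.1).symm (DFunLike.congr_fun hγ p.2).symm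

def probMeas (Z : Type*) [TopologicalSpace Z] : Set (Meas Z) :=
  {ν | ν ∈ PosMeas Z ∧ ν 1 = 1}

lemma isClosed_posMeas : IsClosed (PosMeas Z) := by
  simp only [PosMeas, Set.ofPred_forall]
  exact isClosed_iInter fun f => isClosed_iInter fun _ =>
    isClosed_le continuous_const (WeakDual.eval_continuous f)

lemma isCompact_probMeas [CompactSpace Z] : IsCompact (probMeas Z) := by
  refine (WeakDual.isCompact_closedBall (0 : StrongDual ℝ C(Z, ℝ)) 1).of_isClosed_subset
    (isClosed_posMeas.inter (isClosed_eq (WeakDual.eval_continuous 1) continuous_const)) ?_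
  rintro ν ⟨hν, hν₁⟩
  simp only [Set.mem_preimage, Metric.mem_closedBall, dist_zero_right]
  refine ContinuousLinearMap.opNorm_le_bound _ zero_le_one fun f => ?_
  simpa [hν₁, mul_comm] using posMeas_abs_apply_le hν f

lemma convex_probMeas : Convex ℝ (probMeas Z) := by
  rintro ν ⟨hν, hν₁⟩ ρ ⟨hρ, hρ₁⟩ a b ha hb hab
  refine ⟨fun f hf => ?_, ?_⟩
  · change 0 ≤ a * ν f + b * ρ f
    have := hν f hf
    have := hρ f hf
    positivity
  · change a * ν 1 + b * ρ 1 = 1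
    rw [hν₁, hρ₁, mul_one, mul_one, hab]

lemma dirac_mem_probMeas (z : Z) : dirac z ∈ probMeas Z :=
  ⟨fun _ hf => hf z, rfl⟩

lemma IsKelvinPlanck.disjoint_probMeas {P : Set (VSp Z)} (h : IsKelvinPlanck P) :
    Disjoint (hatP P) ({(0 : Meas Z)} ×ˢ probMeas Z) := by
  refine Set.disjoint_left.2 fun p hp ⟨hp₁, hp₂, hp₃⟩ => ?_
  have : p = (0, 0) := h.2.subset ⟨hp, hp₁, hp₂⟩
  rw [this] at hp₃
  exact zero_ne_one hp₃

lemma nonpos_of_forall_mem_hatP_lt {P : Set (VSp Z)} {f : VSp Z →L[ℝ] ℝ} {u : ℝ}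
    (hf : ∀ p ∈ hatP P, f p < u) {p : VSp Z} (hp : p ∈ hatP P) : f p ≤ 0 := by
  by_contra! hpos
  have hu : 0 ≤ u := (hpos.trans (hf p hp)).le
  have := hf _ (smul_mem_hatP (div_nonneg hu hpos.le) hp)
  rw [map_smul, smul_eq_mul, div_mul_cancel₀ _ hpos.ne'] at this
  exact this.false

theorem IsKelvinPlanck.exists_isCDPair [CompactSpace Z] {P : Set (VSp Z)}
    (h : IsKelvinPlanck P) : ∃ η T : C(Z, ℝ), IsCDPair P η T := by
  obtain ⟨f, u, v, hfP, huv, hfK⟩ := geometric_hahn_banach_closed_compact h.1.2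
    isClosed_closure ((convex_singleton 0).prod convex_probMeas)
    (isCompact_singleton.prod isCompact_probMeas) h.disjoint_probMeas
  obtain ⟨η, γ, hf⟩ := exists_apply_eq_fst_add_snd f
  have hu : 0 < u := by simpa using hfP 0 h.zero_mem_hatP
  have hγ : ∀ z, 0 < γ z := fun z => by
    have := hfK (0, dirac z) ⟨rfl, dirac_mem_probMeas z⟩
    rw [hf] at this
    change v < 0 + γ z at this
    linarith
  refine ⟨-η, recip γ hγ, fun z => inv_pos.2 (hγ z), fun β hβ p hp => ?_⟩
  obtain rfl : β = γ := ContinuousMap.ext fun z => (hβ z).trans (inv_inv _)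
  have := nonpos_of_forall_mem_hatP_lt hfP (subset_hatP P hp)
  rw [hf] at this
  rw [map_neg]
  linarith

end Existence

lemma HotterState.map_of_essCont [CompactSpace Z] [CompactSpace W] {ι : C(Z, W)}
    {P : Set (VSp Z)} {Q : Set (VSp W)} (hP : IsKelvinPlanck P) (hess : EssCont ι P Q)
    {a b : Z} (hab : HotterState P a b) (hne : hotnessLevel Q (ι a) ≠ hotnessLevel Q (ι b)) :
    HotterState Q (ι a) (ι b) := by
  refine ⟨hne, fun Pd _ hQPd hpass hKP => ?_⟩
  obtain ⟨η, T, hcd⟩ := hKP.exists_isCDPair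
  have hcdQ := hcd.of_subset_hatP hQPd
  have hlt : T (ι b) < T (ι a) := (hcdQ.comp hess).lt_of_hotterState hP hab
  have hle : T (ι a) ≤ T (ι b) := hcd.le_of_isPassiveHT
    (fun _ hx => (hcdQ.apply_eq_of_sameHotness hx).symm)
    (fun _ hx => (hcdQ.apply_eq_of_sameHotness hx).symm) hpass
  exact hle.not_gt hlt

/-- For a thermometer, this is the paper's notion of an *ideal* thermometer. -/
def CDTempUniqueUpToScale (P : Set (VSp Z)) : Prop :=
  ∃ T₀ : C(Z, ℝ), IsCDTemp P T₀ ∧ ∀ T : C(Z, ℝ), IsCDTemp P T → ∃ α : ℝ, 0 < α ∧ T = α • T₀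

lemma CDTempUniqueUpToScale.exists_eq_smul {P : Set (VSp Z)} (h : CDTempUniqueUpToScale P)
    {T T' : C(Z, ℝ)} (hT : IsCDTemp P T) (hT' : IsCDTemp P T') :
    ∃ α : ℝ, 0 < α ∧ T' = α • T := by
  obtain ⟨T₀, -, hT₀⟩ := h
  obtain ⟨α, hα, rfl⟩ := hT₀ T hT
  obtain ⟨α', hα', rfl⟩ := hT₀ T' hT'
  exact ⟨α' / α, div_pos hα' hα, by rw [smul_smul, div_mul_cancel₀ _ hα.ne']⟩

namespace IsThermometricConjunction

variable {Θ X : Type*} [TopologicalSpace Θ] [TopologicalSpace X]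
  {PΘ : Set (VSp Θ)} {P : Set (VSp X)} {PC : Set (VSp (Θ ⊕ X))}

lemma exists_sameHotness_inl (hTC : IsThermometricConjunction PΘ P PC) :
    ∀ a : Θ ⊕ X, ∃ θ : Θ, SameHotness PC a (Sum.inl θ)
  | .inl θ => ⟨θ, SameHotness.refl hTC.1.zero_mem_hatP _⟩
  | .inr σ => hTC.2.2 σ

lemma totallyOrderedHotness [CompactSpace Θ] [CompactSpace X]
    (hTC : IsThermometricConjunction PΘ P PC) (hPΘ : IsKelvinPlanck PΘ)
    (hord : TotallyOrderedHotness PΘ) : TotallyOrderedHotness PC := by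
  intro a b
  by_cases hab : SameHotness PC a b
  · exact Or.inl hab
  have hconv := hTC.1.1.2
  have hess : EssCont (inlCM Θ X) PΘ PC := hTC.2.1.2.1
  obtain ⟨θa, ha⟩ := hTC.exists_sameHotness_inl a
  obtain ⟨θb, hb⟩ := hTC.exists_sameHotness_inl b
  have hθ : ¬ SameHotness PC (Sum.inl θa) (Sum.inl θb) := fun h =>
    hab ((ha.trans hconv h).trans hconv hb.symm)
  have hne : hotnessLevel PC (Sum.inl θa) ≠ hotnessLevel PC (Sum.inl θb) := fun h =>
    hθ (sameHotness_of_hotnessLevel_eq hTC.1.zero_mem_hatP h)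
  unfold HotterState
  rw [ha.hotnessLevel_eq hconv, hb.hotnessLevel_eq hconv]
  rcases hord θa θb with h | h | h
  · exact absurd (h.map_of_essCont hess) hθ
  · exact Or.inr (Or.inl (h.map_of_essCont hPΘ hess hne))
  · exact Or.inr (Or.inr (h.map_of_essCont hPΘ hess hne.symm))

lemma eq_smul_of_comp_inl_eq_smul (hTC : IsThermometricConjunction PΘ P PC)
    {T T' : C(Θ ⊕ X, ℝ)} (hT : IsCDTemp PC T) (hT' : IsCDTemp PC T') {α : ℝ}
    (h : T'.comp (inlCM Θ X) = α • T.comp (inlCM Θ X)) : T' = α • T := by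
  obtain ⟨η, hη⟩ := hT
  obtain ⟨η', hη'⟩ := hT'
  ext z
  obtain ⟨θ, hz⟩ := hTC.exists_sameHotness_inl z
  rw [hη'.apply_eq_of_sameHotness hz, ContinuousMap.smul_apply,
    hη.apply_eq_of_sameHotness hz]
  exact DFunLike.congr_fun h θ

lemma cdTempUniqueUpToScale [CompactSpace Θ] [CompactSpace X]
    (hTC : IsThermometricConjunction PΘ P PC) (hideal : CDTempUniqueUpToScale PΘ) :
    CDTempUniqueUpToScale PC := by
  obtain ⟨η₀, T₀, h₀⟩ := hTC.1.exists_isCDPair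
  refine ⟨T₀, ⟨η₀, h₀⟩, fun T ⟨η, hT⟩ => ?_⟩
  have hess : EssCont (inlCM Θ X) PΘ PC := hTC.2.1.2.1
  obtain ⟨α, hα, hαT⟩ := hideal.exists_eq_smul ⟨_, h₀.comp hess⟩ ⟨_, hT.comp hess⟩
  exact ⟨α, hα, hTC.eq_smul_of_comp_inl_eq_smul ⟨η₀, h₀⟩ ⟨η, hT⟩ hαT⟩

end IsThermometricConjunction

end

theorem thermometric_conjunction_properties_general
    {Θ X : Type*} [TopologicalSpace Θ] [CompactSpace Θ]
    [TopologicalSpace X] [CompactSpace X]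
    (P : Set (VSp X))
    (PΘ : Set (VSp Θ)) (hPΘ : IsKelvinPlanck PΘ)
    (hord : TotallyOrderedHotness PΘ)
    (PC : Set (VSp (Θ ⊕ X))) (hTC : IsThermometricConjunction PΘ P PC) :
    ((∀ a b : Θ ⊕ X, SameHotness PC a b ∨ HotterState PC a b ∨ HotterState PC b a) ∧
      (∀ σ σ' : X, ¬ SameHotness PC (Sum.inr σ) (Sum.inr σ') →
        HotterState PC (Sum.inr σ) (Sum.inr σ') ∨
          HotterState PC (Sum.inr σ') (Sum.inr σ))) ∧
    ((∃ T₀ : C(Θ, ℝ), IsCDTemp PΘ T₀ ∧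
        ∀ T : C(Θ, ℝ), IsCDTemp PΘ T → ∃ α : ℝ, 0 < α ∧ T = α • T₀) →
      (∃ TC : C(Θ ⊕ X, ℝ), IsCDTemp PC TC ∧
        ∀ T : C(Θ ⊕ X, ℝ), IsCDTemp PC T → ∃ α : ℝ, 0 < α ∧ T = α • TC) ∧
      (∀ T T' : C(Θ ⊕ X, ℝ), IsCDTemp PC T → IsCDTemp PC T' →
        ∃ α : ℝ, 0 < α ∧ ∀ σ : X, T' (Sum.inr σ) = α * T (Sum.inr σ))) := by
  have hordC : TotallyOrderedHotness PC := hTC.totallyOrderedHotness hPΘ hord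
  refine ⟨⟨hordC, fun σ σ' hσ => (hordC _ _).resolve_left hσ⟩, fun hideal => ?_⟩
  have hC : CDTempUniqueUpToScale PC := hTC.cdTempUniqueUpToScale hideal
  refine ⟨hC, fun T T' hT hT' => ?_⟩
  obtain ⟨α, hα, hαT⟩ := hC.exists_eq_smul hT hT'
  exact ⟨α, hα, fun σ => DFunLike.congr_fun hαT (Sum.inr σ)⟩

/-- **Theorem.** Let `(X, P)` be a Kelvin–Planck theory, `(Θ, PΘ)` a thermometer for
it (a Kelvin–Planck theory with totally ordered hotness levels), and let `PC` (on
`Θ ⊕ X`) be a thermometric conjunction of the two.  Then: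
(i) the hotness levels of the conjunction are totally ordered by its hotter-than
relation; in particular, any two states of `X` not of the same hotness in the
conjunction are comparable;
(ii) if the thermometer is ideal, then all Clausius–Duhem temperature scales for the
conjunction are positive multiples of some fixed one, and in particular their
restrictions to `X` differ by at most a positive multiple. -/
theorem thermometric_conjunction_properties
    {Θ X : Type*} [TopologicalSpace Θ] [CompactSpace Θ] [T2Space Θ]
    [TopologicalSpace X] [CompactSpace X] [T2Space X]
    (P : Set (VSp X)) (hP : IsKelvinPlanck P)
    (PΘ : Set (VSp Θ)) (hPΘ : IsKelvinPlanck PΘ)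
    (hord : TotallyOrderedHotness PΘ)
    (PC : Set (VSp (Θ ⊕ X))) (hTC : IsThermometricConjunction PΘ P PC) :
    ((∀ a b : Θ ⊕ X, SameHotness PC a b ∨ HotterState PC a b ∨ HotterState PC b a) ∧
      (∀ σ σ' : X, ¬ SameHotness PC (Sum.inr σ) (Sum.inr σ') →
        HotterState PC (Sum.inr σ) (Sum.inr σ') ∨
          HotterState PC (Sum.inr σ') (Sum.inr σ))) ∧
    ((∃ T₀ : C(Θ, ℝ), IsCDTemp PΘ T₀ ∧
        ∀ T : C(Θ, ℝ), IsCDTemp PΘ T → ∃ α : ℝ, 0 < α ∧ T = α • T₀) →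
      (∃ TC : C(Θ ⊕ X, ℝ), IsCDTemp PC TC ∧
        ∀ T : C(Θ ⊕ X, ℝ), IsCDTemp PC T → ∃ α : ℝ, 0 < α ∧ T = α • TC) ∧
      (∀ T T' : C(Θ ⊕ X, ℝ), IsCDTemp PC T → IsCDTemp PC T' →
        ∃ α : ℝ, 0 < α ∧ ∀ σ : X, T' (Sum.inr σ) = α * T (Sum.inr σ))) :=
  thermometric_conjunction_properties_general P PΘ hPΘ hord PC hTC
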